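/- Let S^{ab} = S^{ba}, γ^a, θ be smooth functions on ℝⁿ and Δ_w the associated canonical pencil. Then the pencil generates the weight-zero bracket on the algebra of densities determined by the extended symbol matrix (S^{ab}, γ^a, θ): for all weights u, v ∈ ℝ and all smooth functions ψ, χ on ℝⁿ (regarded as components of densities of weights u and v), Δ_{u+v}(ψ·χ) − (Δ_u ψ)·χ − ψ·(Δ_v χ) = Σ_{a,b} S^{ab} (∂_b ψ)(∂_a χ) + Σ_a γ^a ( v·(∂_a ψ)·χ + u·ψ·(∂_a χ) ) + u·v·θ·ψ·χ. -/

import Mathlib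

open scoped BigOperators

/-- Partial derivative `∂_a f` of a function on `ℝⁿ`. -/
noncomputable def pd {n : ℕ} (a : Fin n) (f : (Fin n → ℝ) → ℝ) : (Fin n → ℝ) → ℝ :=
  fun x => fderiv ℝ f x (Pi.single a 1)

/-- The canonical pencil of operators associated to data `(S^{ab}, γ^a, θ)`:
`Δ_w f = (1/2)·(Σ_{a,b} S^{ab} ∂_a∂_b f + Σ_a (Σ_b ∂_b S^{ba} + (2w−1)γ^a) ∂_a f
  + (w·Σ_a ∂_a γ^a + w(w−1)·θ)·f)`. -/
noncomputable def canonicalPencil {n : ℕ} (S : Fin n → Fin n → (Fin n → ℝ) → ℝ)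
    (γ : Fin n → (Fin n → ℝ) → ℝ) (θ : (Fin n → ℝ) → ℝ) (w : ℝ)
    (f : (Fin n → ℝ) → ℝ) : (Fin n → ℝ) → ℝ :=
  fun x => (1/2) * ((∑ a, ∑ b, S a b x * pd a (pd b f) x)
    + (∑ a, ((∑ b, pd b (S b a) x) + (2 * w - 1) * γ a x) * pd a f x)
    + (w * (∑ a, pd a (γ a) x) + w * (w - 1) * θ x) * f x)

/-!
Write `Δ_w = Δ_0 + w·γ^a∂_a + (w/2)·(∂_aγ^a + (w − 1)·θ)`. The bracket
`Δ_{u+v}(ψχ) − (Δ_u ψ)χ − ψ(Δ_v χ)` splits accordingly into three pieces. `Δ_0` is a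
second-order operator without free term, so by the Leibniz rule only the cross terms of
`S^{ab}∂_a∂_b(ψχ)` survive, and the symmetry of `S` merges them into `S^{ab}∂_bψ ∂_aχ`.
The derivation `γ^a∂_a` enters with the weight-dependent factors `u + v`, `u`, `v`, leaving
`v·γ(ψ)·χ + u·ψ·γ(χ)`. The free terms leave `(u+v)(u+v−1) − u(u−1) − v(v−1) = 2uv` times `θ/2`.
-/

section

variable {n : ℕ}

theorem pd_add (a : Fin n) {f g : (Fin n → ℝ) → ℝ} {x : Fin n → ℝ}
    (hf : DifferentiableAt ℝ f x) (hg : DifferentiableAt ℝ g x) :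
    pd a (fun y => f y + g y) x = pd a f x + pd a g x := by
  simp [pd, fderiv_fun_add hf hg]

theorem pd_mul (a : Fin n) {f g : (Fin n → ℝ) → ℝ} {x : Fin n → ℝ}
    (hf : DifferentiableAt ℝ f x) (hg : DifferentiableAt ℝ g x) :
    pd a (fun y => f y * g y) x = pd a f x * g x + f x * pd a g x := by
  simp only [pd, fderiv_fun_mul hf hg, add_apply, smul_apply, smul_eq_mul]
  ring

theorem contDiff_pd (a : Fin n) {m : WithTop ℕ∞} {f : (Fin n → ℝ) → ℝ}
    (hf : ContDiff ℝ (m + 1) f) : ContDiff ℝ m (pd a f) :=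
  (hf.fderiv_right le_rfl).clm_apply contDiff_const

theorem pd_pd_mul (a b : Fin n) {f g : (Fin n → ℝ) → ℝ}
    (hf : ContDiff ℝ 2 f) (hg : ContDiff ℝ 2 g) (x : Fin n → ℝ) :
    pd a (pd b (fun y => f y * g y)) x
      = pd a (pd b f) x * g x + pd b f x * pd a g x
        + pd a f x * pd b g x + f x * pd a (pd b g) x := by
  have hf1 : Differentiable ℝ f := hf.differentiable two_ne_zero
  have hg1 : Differentiable ℝ g := hg.differentiable two_ne_zero
  have hbf : Differentiable ℝ (pd b f) := (contDiff_pd b hf).differentiable one_ne_zero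
  have hbg : Differentiable ℝ (pd b g) := (contDiff_pd b hg).differentiable one_ne_zero
  have leibniz : pd b (fun y => f y * g y) = fun y => pd b f y * g y + f y * pd b g y :=
    funext fun y => pd_mul b (hf1 y) (hg1 y)
  rw [leibniz, pd_add a ((hbf x).fun_mul (hg1 x)) ((hf1 x).fun_mul (hbg x)),
    pd_mul a (hbf x) (hg1 x), pd_mul a (hf1 x) (hbg x)]
  ring

theorem sum_mul_pd_mul (c : Fin n → ℝ) {f g : (Fin n → ℝ) → ℝ} {x : Fin n → ℝ}
    (hf : DifferentiableAt ℝ f x) (hg : DifferentiableAt ℝ g x) :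
    ∑ a, c a * pd a (fun y => f y * g y) x
      = (∑ a, c a * pd a f x) * g x + f x * ∑ a, c a * pd a g x := by
  simp only [pd_mul _ hf hg, Finset.sum_mul, Finset.mul_sum, ← Finset.sum_add_distrib]
  exact Finset.sum_congr rfl fun a _ => by ring

theorem sum_sum_mul_pd_pd_mul {s : Fin n → Fin n → ℝ} (hs : ∀ a b, s a b = s b a)
    {f g : (Fin n → ℝ) → ℝ} (hf : ContDiff ℝ 2 f) (hg : ContDiff ℝ 2 g) (x : Fin n → ℝ) :
    ∑ a, ∑ b, s a b * pd a (pd b (fun y => f y * g y)) x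
      = (∑ a, ∑ b, s a b * pd a (pd b f) x) * g x
        + 2 * (∑ a, ∑ b, s a b * pd b f x * pd a g x)
        + f x * ∑ a, ∑ b, s a b * pd a (pd b g) x := by
  have swap : ∑ a, ∑ b, s a b * pd a f x * pd b g x = ∑ a, ∑ b, s a b * pd b f x * pd a g x := by
    rw [Finset.sum_comm]
    simp only [hs]
  calc ∑ a, ∑ b, s a b * pd a (pd b (fun y => f y * g y)) x
      = ∑ a, ∑ b, (s a b * pd a (pd b f) x * g x + s a b * pd b f x * pd a g x
          + s a b * pd a f x * pd b g x + f x * (s a b * pd a (pd b g) x)) :=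
        Finset.sum_congr rfl fun a _ => Finset.sum_congr rfl fun b _ => by
          rw [pd_pd_mul a b hf hg]; ring
    _ = _ := by
        simp only [Finset.sum_add_distrib, ← Finset.sum_mul, ← Finset.mul_sum, swap]
        ring

section Pencil

variable (S : Fin n → Fin n → (Fin n → ℝ) → ℝ) (γ : Fin n → (Fin n → ℝ) → ℝ)
  (θ : (Fin n → ℝ) → ℝ)

theorem canonicalPencil_eq_zero_add (w : ℝ) (f : (Fin n → ℝ) → ℝ) (x : Fin n → ℝ) :
    canonicalPencil S γ θ w f x
      = canonicalPencil S γ θ 0 f x + w * ∑ a, γ a x * pd a f x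
        + w / 2 * ((∑ a, pd a (γ a) x) + (w - 1) * θ x) * f x := by
  simp only [canonicalPencil, add_mul, Finset.sum_add_distrib, mul_assoc, ← Finset.mul_sum]
  ring

theorem canonicalPencil_zero_mul {x : Fin n → ℝ} (hS : ∀ a b, S a b x = S b a x)
    {f g : (Fin n → ℝ) → ℝ} (hf : ContDiff ℝ 2 f) (hg : ContDiff ℝ 2 g) :
    canonicalPencil S γ θ 0 (fun y => f y * g y) x
      = canonicalPencil S γ θ 0 f x * g x + f x * canonicalPencil S γ θ 0 g x
        + ∑ a, ∑ b, S a b x * pd b f x * pd a g x := by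
  simp only [canonicalPencil]
  rw [sum_sum_mul_pd_pd_mul hS hf hg x, sum_mul_pd_mul _ (hf.differentiable two_ne_zero x)
    (hg.differentiable two_ne_zero x)]
  ring

end Pencil

end

theorem canonicalPencil_generates_density_bracket_general {n : ℕ}
    (S : Fin n → Fin n → (Fin n → ℝ) → ℝ)
    (γ : Fin n → (Fin n → ℝ) → ℝ) (θ : (Fin n → ℝ) → ℝ)
    (hSsym : ∀ a b, S a b = S b a)
    (u v : ℝ) (ψ χ : (Fin n → ℝ) → ℝ)
    (hψ : ContDiff ℝ (⊤ : ℕ∞) ψ) (hχ : ContDiff ℝ (⊤ : ℕ∞) χ) (x : Fin n → ℝ) :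
    canonicalPencil S γ θ (u + v) (fun y => ψ y * χ y) x
      - canonicalPencil S γ θ u ψ x * χ x - ψ x * canonicalPencil S γ θ v χ x
    = (∑ a, ∑ b, S a b x * pd b ψ x * pd a χ x)
      + (∑ a, γ a x * (v * pd a ψ x * χ x + u * ψ x * pd a χ x))
      + u * v * θ x * ψ x * χ x := by
  have hψ2 : ContDiff ℝ 2 ψ := hψ.of_le (by norm_cast)
  have hχ2 : ContDiff ℝ 2 χ := hχ.of_le (by norm_cast)
  have hγ_split : ∑ a, γ a x * (v * pd a ψ x * χ x + u * ψ x * pd a χ x)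
      = v * (∑ a, γ a x * pd a ψ x) * χ x + u * ψ x * ∑ a, γ a x * pd a χ x := by
    simp only [Finset.mul_sum, Finset.sum_mul, ← Finset.sum_add_distrib]
    exact Finset.sum_congr rfl fun a _ => by ring
  rw [canonicalPencil_eq_zero_add S γ θ (u + v), canonicalPencil_eq_zero_add S γ θ u,
    canonicalPencil_eq_zero_add S γ θ v,
    canonicalPencil_zero_mul S γ θ (fun a b => congrFun (hSsym a b) x) hψ2 hχ2,
    sum_mul_pd_mul _ (hψ2.differentiable two_ne_zero x) (hχ2.differentiable two_ne_zero x),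
    hγ_split]
  ring

/-- the canonical pencil generates the weight-zero bracket on the algebra
of densities determined by the extended symbol `(S^{ab}, γ^a, θ)`: for densities of
weights `u, v` with smooth components `ψ, χ`,
`Δ_{u+v}(ψχ) − (Δ_u ψ)χ − ψ(Δ_v χ)
  = Σ_{a,b} S^{ab} ∂_bψ ∂_aχ + Σ_a γ^a (v·∂_aψ·χ + u·ψ·∂_aχ) + u·v·θ·ψ·χ`. -/
theorem canonicalPencil_generates_density_bracket {n : ℕ}
    (S : Fin n → Fin n → (Fin n → ℝ) → ℝ)
    (γ : Fin n → (Fin n → ℝ) → ℝ) (θ : (Fin n → ℝ) → ℝ)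
    (hS : ∀ a b, ContDiff ℝ (⊤ : ℕ∞) (S a b)) (hSsym : ∀ a b, S a b = S b a)
    (hγ : ∀ a, ContDiff ℝ (⊤ : ℕ∞) (γ a)) (hθ : ContDiff ℝ (⊤ : ℕ∞) θ)
    (u v : ℝ) (ψ χ : (Fin n → ℝ) → ℝ)
    (hψ : ContDiff ℝ (⊤ : ℕ∞) ψ) (hχ : ContDiff ℝ (⊤ : ℕ∞) χ) (x : Fin n → ℝ) :
    canonicalPencil S γ θ (u + v) (fun y => ψ y * χ y) x
      - canonicalPencil S γ θ u ψ x * χ x - ψ x * canonicalPencil S γ θ v χ x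
    = (∑ a, ∑ b, S a b x * pd b ψ x * pd a χ x)
      + (∑ a, γ a x * (v * pd a ψ x * χ x + u * ψ x * pd a χ x))
      + u * v * θ x * ψ x * χ x :=
  canonicalPencil_generates_density_bracket_general S γ θ hSsym u v ψ χ hψ hχ x
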